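/- arXiv:2504.00724 — 2 statements merged into one kernel-verified Lean document; each statement's English description precedes it below -/
import Mathlib

section
/- Let u : ℝ → ℝ be six times continuously differentiable and let ⟨u⟩_i := (1/h)∫_{ih}^{(i+1)h} u(x) dx denote the cell average over the i-th cell of a uniform grid with step h > 0. Then the average of u'' over cell i satisfies ⟨u''⟩_i = (1/(12h²))(−⟨u⟩_{i+2} + 16⟨u⟩_{i+1} − 30⟨u⟩_i + 16⟨u⟩_{i−1} − ⟨u⟩_{i−2}) + O(h⁴) as h → 0. -/
open intervalIntegral MeasureTheory Set

private lemma idsub {n : ℕ} {f g : ℝ → ℝ} (hf : ContDiff ℝ n f) (hg : ContDiff ℝ n g) (x : ℝ) :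
    iteratedDeriv n (fun y => f y - g y) x = iteratedDeriv n f x - iteratedDeriv n g x := by
  have e : (fun y => f y - g y) = f - g := rfl
  rw [e, ← iteratedDerivWithin_univ, ← iteratedDerivWithin_univ, ← iteratedDerivWithin_univ]
  exact iteratedDerivWithin_sub (Set.mem_univ x) uniqueDiffOn_univ hf.contDiffAt.contDiffWithinAt hg.contDiffAt.contDiffWithinAt

private lemma abs_int_pow (a x : ℝ) (n : ℕ) :
    |∫ t in a..x, |t - a| ^ n| = |x - a| ^ (n + 1) / (n + 1) := by
  rcases le_total a x with hax | hax
  · have e : Set.EqOn (fun t => |t - a| ^ n) (fun t => (t - a) ^ n) (Set.uIcc a x) := by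
      intro t ht
      rw [Set.uIcc_of_le hax] at ht
      simp only
      rw [abs_of_nonneg (by linarith [ht.1])]
    rw [intervalIntegral.integral_congr e,
      show (fun t : ℝ => (t - a) ^ n) = (fun t : ℝ => (fun s : ℝ => s ^ n) (t - a)) from rfl,
      intervalIntegral.integral_comp_sub_right (fun s : ℝ => s ^ n) a, integral_pow, sub_self,
      zero_pow (Nat.succ_ne_zero n), sub_zero,
      abs_of_nonneg (div_nonneg (pow_nonneg (by linarith) _) (by positivity)),
      abs_of_nonneg (by linarith : (0:ℝ) ≤ x - a)]
  · have e : Set.EqOn (fun t => |t - a| ^ n) (fun t => (a - t) ^ n) (Set.uIcc a x) := by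
      intro t ht
      rw [Set.uIcc_of_ge hax] at ht
      simp only
      rw [abs_of_nonpos (by linarith [ht.2]), neg_sub]
    rw [intervalIntegral.integral_congr e,
      show (fun t : ℝ => (a - t) ^ n) = (fun t : ℝ => (fun s : ℝ => s ^ n) (a - t)) from rfl,
      intervalIntegral.integral_comp_sub_left (fun s : ℝ => s ^ n) a, integral_pow, sub_self,
      zero_pow (Nat.succ_ne_zero n), zero_sub, abs_div, abs_neg,
      abs_of_nonneg (pow_nonneg (by linarith : (0:ℝ) ≤ a - x) _),
      abs_of_nonneg (by positivity : (0:ℝ) ≤ (n:ℝ) + 1),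
      abs_of_nonpos (by linarith : x - a ≤ 0), neg_sub]

private lemma polyBound : ∀ (n : ℕ) (f : ℝ → ℝ), ContDiff ℝ n f →
    ∀ (M a : ℝ), (∀ k, k < n → iteratedDeriv k f a = 0) →
    (∀ x, |iteratedDeriv n f x| ≤ M) → ∀ x, |f x| ≤ M * |x - a| ^ n / (Nat.factorial n) := by
  intro n
  induction n with
  | zero => intro f _ M a _ hM x; simpa using hM x
  | succ n ih =>
    intro f hf M a hz hM x
    have hM0 : 0 ≤ M := le_trans (abs_nonneg _) (hM a)
    have hf' : ContDiff ℝ (n + 1 : ℕ) f := hf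
    rw [show ((n + 1 : ℕ) : WithTop ℕ∞) = (n : ℕ) + 1 by push_cast; rfl] at hf'
    obtain ⟨hdiff, -, hfd⟩ := contDiff_succ_iff_deriv.mp hf'
    have hz' : ∀ k, k < n → iteratedDeriv k (deriv f) a = 0 := by
      intro k hk
      rw [← iteratedDeriv_succ']
      exact hz (k + 1) (by omega)
    have hM' : ∀ y, |iteratedDeriv n (deriv f) y| ≤ M := by
      intro y
      rw [← iteratedDeriv_succ']
      exact hM y
    have hd := ih (deriv f) hfd M a hz' hM'
    have hfa : f a = 0 := by simpa using hz 0 (Nat.succ_pos n)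
    have hcont : Continuous (deriv f) := hfd.continuous
    have ftc : ∫ t in a..x, deriv f t = f x - f a :=
      intervalIntegral.integral_deriv_eq_sub (fun t _ => hdiff t)
        (hcont.intervalIntegrable a x)
    have hgi : IntervalIntegrable (fun t => M / (Nat.factorial n) * |t - a| ^ n) volume a x :=
      (Continuous.intervalIntegrable (by fun_prop)) a x
    have key : |f x| ≤ |∫ t in a..x, M / (Nat.factorial n) * |t - a| ^ n| := by
      have e2 : f x = ∫ t in a..x, deriv f t := by rw [ftc, hfa, sub_zero]
      rw [e2, ← Real.norm_eq_abs (∫ t in a..x, deriv f t)]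
      refine intervalIntegral.norm_integral_le_abs_of_norm_le ?_ hgi
      filter_upwards with t
      rw [Real.norm_eq_abs]
      calc |deriv f t| ≤ M * |t - a| ^ n / (Nat.factorial n) := hd t
        _ = M / (Nat.factorial n) * |t - a| ^ n := by ring
    calc |f x| ≤ |∫ t in a..x, M / (Nat.factorial n) * |t - a| ^ n| := key
      _ = |M / (Nat.factorial n)| * |∫ t in a..x, |t - a| ^ n| := by
          rw [intervalIntegral.integral_const_mul (M / (Nat.factorial n)) (fun t => |t - a| ^ n),
            abs_mul]
      _ = M / (Nat.factorial n) * (|x - a| ^ (n + 1) / (n + 1)) := by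
          rw [abs_int_pow, abs_of_nonneg (by positivity)]
      _ = M * |x - a| ^ (n + 1) / (Nat.factorial (n+1)) := by
          rw [Nat.factorial_succ, div_mul_div_comm]
          push_cast
          ring_nf

private def quin (a b0 b1 b2 b3 b4 b5 : ℝ) : ℝ → ℝ :=
  fun y => b0 + b1 * (y - a) + b2 * (y - a) ^ 2 + b3 * (y - a) ^ 3 + b4 * (y - a) ^ 4
    + b5 * (y - a) ^ 5

private lemma quin_hasDerivAt (a b0 b1 b2 b3 b4 b5 x : ℝ) :
    HasDerivAt (quin a b0 b1 b2 b3 b4 b5)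
      (quin a b1 (2 * b2) (3 * b3) (4 * b4) (5 * b5) 0 x) x := by
  have hb : HasDerivAt (fun y : ℝ => y - a) 1 x := (hasDerivAt_id x).sub_const a
  have H := ((((((hasDerivAt_const x b0).add (hb.const_mul b1)).add
    ((hb.pow 2).const_mul b2)).add ((hb.pow 3).const_mul b3)).add
    ((hb.pow 4).const_mul b4)).add ((hb.pow 5).const_mul b5))
  have e : quin a b1 (2 * b2) (3 * b3) (4 * b4) (5 * b5) 0 x =
      0 + b1 * 1 + b2 * (↑2 * (x - a) ^ (2 - 1) * 1) + b3 * (↑3 * (x - a) ^ (3 - 1) * 1)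
        + b4 * (↑4 * (x - a) ^ (4 - 1) * 1) + b5 * (↑5 * (x - a) ^ (5 - 1) * 1) := by
    simp only [quin]
    push_cast
    ring
  rw [e]
  exact H

private lemma quin_deriv (a b0 b1 b2 b3 b4 b5 : ℝ) :
    deriv (quin a b0 b1 b2 b3 b4 b5) = quin a b1 (2 * b2) (3 * b3) (4 * b4) (5 * b5) 0 :=
  funext fun x => (quin_hasDerivAt a b0 b1 b2 b3 b4 b5 x).deriv

private lemma quin_contDiff (a b0 b1 b2 b3 b4 b5 : ℝ) {n : WithTop ℕ∞} :
    ContDiff ℝ n (quin a b0 b1 b2 b3 b4 b5) := by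
  have hb : ContDiff ℝ n (fun y : ℝ => y - a) := contDiff_id.sub contDiff_const
  exact ((((contDiff_const.add (contDiff_const.mul hb)).add
    (contDiff_const.mul (hb.pow 2))).add (contDiff_const.mul (hb.pow 3))).add
    (contDiff_const.mul (hb.pow 4))).add (contDiff_const.mul (hb.pow 5))

private lemma quin_continuous (a b0 b1 b2 b3 b4 b5 : ℝ) :
    Continuous (quin a b0 b1 b2 b3 b4 b5) :=
  (quin_contDiff a b0 b1 b2 b3 b4 b5 (n := 0)).continuous

private lemma quin_eval (a b0 b1 b2 b3 b4 b5 : ℝ) : quin a b0 b1 b2 b3 b4 b5 a = b0 := by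
  simp [quin]

private lemma quin_integral (a b0 b1 b2 b3 b4 b5 p q : ℝ) :
    ∫ x in p..q, quin a b0 b1 b2 b3 b4 b5 x =
      (b0 * (q - a) + b1 * (q - a) ^ 2 / 2 + b2 * (q - a) ^ 3 / 3 + b3 * (q - a) ^ 4 / 4
        + b4 * (q - a) ^ 5 / 5 + b5 * (q - a) ^ 6 / 6)
      - (b0 * (p - a) + b1 * (p - a) ^ 2 / 2 + b2 * (p - a) ^ 3 / 3 + b3 * (p - a) ^ 4 / 4
        + b4 * (p - a) ^ 5 / 5 + b5 * (p - a) ^ 6 / 6) := by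
  have hd : ∀ x : ℝ, HasDerivAt (fun y => b0 * (y - a) + b1 * (y - a) ^ 2 / 2
      + b2 * (y - a) ^ 3 / 3 + b3 * (y - a) ^ 4 / 4 + b4 * (y - a) ^ 5 / 5
      + b5 * (y - a) ^ 6 / 6) (quin a b0 b1 b2 b3 b4 b5 x) x := by
    intro x
    have hb : HasDerivAt (fun y : ℝ => y - a) 1 x := (hasDerivAt_id x).sub_const a
    have H := ((((((hb.const_mul b0).add (((hb.pow 2).const_mul b1).div_const 2)).add
      (((hb.pow 3).const_mul b2).div_const 3)).add
      (((hb.pow 4).const_mul b3).div_const 4)).add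
      (((hb.pow 5).const_mul b4).div_const 5)).add
      (((hb.pow 6).const_mul b5).div_const 6))
    have e : quin a b0 b1 b2 b3 b4 b5 x =
        b0 * 1 + b1 * (↑2 * (x - a) ^ (2 - 1) * 1) / 2 + b2 * (↑3 * (x - a) ^ (3 - 1) * 1) / 3
          + b3 * (↑4 * (x - a) ^ (4 - 1) * 1) / 4 + b4 * (↑5 * (x - a) ^ (5 - 1) * 1) / 5
          + b5 * (↑6 * (x - a) ^ (6 - 1) * 1) / 6 := by
      simp only [quin]
      push_cast
      ring
    rw [e]
    exact H
  rw [intervalIntegral.integral_eq_sub_of_hasDerivAt (fun x _ => hd x)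
    ((quin_continuous a b0 b1 b2 b3 b4 b5).intervalIntegrable p q)]

set_option maxHeartbeats 3200000 in
/-- Fourth-order finite-volume formula for the second derivative: for a `C⁶`
function `u` with bounded sixth derivative, the cell averages `⟨u⟩_i` on a
uniform grid of step `h` satisfy
`⟨u''⟩_i = (1/(12h²))(−⟨u⟩_{i+2} + 16⟨u⟩_{i+1} − 30⟨u⟩_i + 16⟨u⟩_{i−1} − ⟨u⟩_{i−2}) + O(h⁴)`. -/
theorem stmt_10 (u : ℝ → ℝ) (hu : ContDiff ℝ 6 u)
    (M : ℝ) (hM : ∀ x : ℝ, |iteratedDeriv 6 u x| ≤ M) :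
    ∃ C : ℝ, 0 < C ∧ ∀ h : ℝ, 0 < h → ∀ i : ℤ,
      let avg : (ℝ → ℝ) → ℤ → ℝ :=
        fun φ j => (1 / h) * ∫ x in (j * h)..((j + 1) * h), φ x
      |avg (deriv (deriv u)) i -
        (1 / (12 * h ^ 2)) * (-(avg u (i + 2)) + 16 * avg u (i + 1)
          - 30 * avg u i + 16 * avg u (i - 1) - avg u (i - 2))| ≤ C * h ^ 4 := by
  have hM0 : 0 ≤ M := le_trans (abs_nonneg _) (hM 0)
  refine ⟨6 * M + 1, by positivity, ?_⟩
  intro h hh i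
  show |1 / h * (∫ x in ((i:ℝ) * h)..(((i:ℝ) + 1) * h), deriv (deriv u) x) -
      1 / (12 * h ^ 2) *
        (-(1 / h * ∫ x in (((i+2:ℤ):ℝ) * h)..((((i+2:ℤ):ℝ)) + 1) * h, u x)
          + 16 * (1 / h * ∫ x in (((i+1:ℤ):ℝ) * h)..((((i+1:ℤ):ℝ)) + 1) * h, u x)
          - 30 * (1 / h * ∫ x in ((i:ℝ) * h)..(((i:ℝ) + 1) * h), u x)
          + 16 * (1 / h * ∫ x in (((i-1:ℤ):ℝ) * h)..((((i-1:ℤ):ℝ)) + 1) * h, u x)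
          - 1 / h * ∫ x in (((i-2:ℤ):ℝ) * h)..((((i-2:ℤ):ℝ)) + 1) * h, u x)|
    ≤ (6 * M + 1) * h ^ 4
  set a : ℝ := (i:ℝ) * h with ha
  -- Taylor polynomial of degree 5 at a, and normal form of its 2nd derivative
  set Q : ℝ → ℝ := quin a (iteratedDeriv 0 u a) (iteratedDeriv 1 u a)
    (iteratedDeriv 2 u a / 2) (iteratedDeriv 3 u a / 6) (iteratedDeriv 4 u a / 24)
    (iteratedDeriv 5 u a / 120) with hQdef
  set R2 : ℝ → ℝ := quin a (iteratedDeriv 2 u a) (iteratedDeriv 3 u a)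
    (iteratedDeriv 4 u a / 2) (iteratedDeriv 5 u a / 6) 0 0 with hR2def
  -- derivative chain facts
  have hQd2 : deriv (deriv Q) = R2 := by
    rw [hQdef, quin_deriv, quin_deriv, hR2def]
    funext x
    simp only [quin]
    ring
  have hQit : ∀ k : ℕ, k < 6 → iteratedDeriv k Q a = iteratedDeriv k u a := by
    intro k hk
    rw [hQdef, iteratedDeriv_eq_iterate]
    interval_cases k
    · show quin a _ _ _ _ _ _ a = _
      rw [quin_eval, iteratedDeriv_zero]
    · show deriv (quin a _ _ _ _ _ _) a = _
      simp only [quin_deriv]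
      rw [quin_eval]
    · show deriv (deriv (quin a _ _ _ _ _ _)) a = _
      simp only [quin_deriv]
      rw [quin_eval]
      ring
    · show deriv (deriv (deriv (quin a _ _ _ _ _ _))) a = _
      simp only [quin_deriv]
      rw [quin_eval]
      ring
    · show deriv (deriv (deriv (deriv (quin a _ _ _ _ _ _)))) a = _
      simp only [quin_deriv]
      rw [quin_eval]
      ring
    · show deriv (deriv (deriv (deriv (deriv (quin a _ _ _ _ _ _))))) a = _
      simp only [quin_deriv]
      rw [quin_eval]
      ring
  have hQ6 : ∀ x, iteratedDeriv 6 Q x = 0 := by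
    intro x
    rw [hQdef, iteratedDeriv_eq_iterate]
    show deriv (deriv (deriv (deriv (deriv (deriv (quin a _ _ _ _ _ _)))))) x = 0
    simp only [quin_deriv]
    simp [quin]
  have hR2it : ∀ k : ℕ, k < 4 → iteratedDeriv k R2 a = iteratedDeriv (k + 2) u a := by
    intro k hk
    rw [hR2def, iteratedDeriv_eq_iterate]
    interval_cases k
    · show quin a _ _ _ _ _ _ a = _
      rw [quin_eval, show (0 + 2 : ℕ) = 2 from rfl]
    · show deriv (quin a _ _ _ _ _ _) a = _
      simp only [quin_deriv]
      rw [quin_eval, show (1 + 2 : ℕ) = 3 from rfl]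
    · show deriv (deriv (quin a _ _ _ _ _ _)) a = _
      simp only [quin_deriv]
      rw [quin_eval, show (2 + 2 : ℕ) = 4 from rfl]
      ring
    · show deriv (deriv (deriv (quin a _ _ _ _ _ _))) a = _
      simp only [quin_deriv]
      rw [quin_eval, show (3 + 2 : ℕ) = 5 from rfl]
      ring
  have hR24 : ∀ x, iteratedDeriv 4 R2 x = 0 := by
    intro x
    rw [hR2def, iteratedDeriv_eq_iterate]
    show deriv (deriv (deriv (deriv (quin a _ _ _ _ _ _)))) x = 0
    simp only [quin_deriv]
    simp [quin]
  -- smoothness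
  have hucont : Continuous u := hu.continuous
  have hu6 : ContDiff ℝ ((5 : WithTop ℕ∞) + 1) u := by
    exact_mod_cast hu
  obtain ⟨hud, -, hu5⟩ := contDiff_succ_iff_deriv.mp hu6
  have hu5' : ContDiff ℝ ((4 : WithTop ℕ∞) + 1) (deriv u) := by exact_mod_cast hu5
  obtain ⟨hud1, -, hu4⟩ := contDiff_succ_iff_deriv.mp hu5'
  -- remainder functions and their bounds
  have hfz : ∀ k, k < 6 → iteratedDeriv k (fun x => u x - Q x) a = 0 := by
    intro k hk
    have hcd : ContDiff ℝ (k : ℕ) u := hu.of_le (by exact_mod_cast (by omega : k ≤ 6))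
    rw [idsub hcd (by rw [hQdef]; exact quin_contDiff _ _ _ _ _ _ _) a, hQit k hk, sub_self]
  have hf6 : ∀ x, |iteratedDeriv 6 (fun x => u x - Q x) x| ≤ M := by
    intro x
    rw [idsub hu (by rw [hQdef]; exact quin_contDiff _ _ _ _ _ _ _) x, hQ6 x, sub_zero]
    exact hM x
  have hfb : ∀ x, |u x - Q x| ≤ M * |x - a| ^ 6 / 720 := by
    intro x
    have := polyBound 6 (fun x => u x - Q x)
      (by exact_mod_cast hu.sub (by rw [hQdef]; exact quin_contDiff _ _ _ _ _ _ _))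
      M a hfz hf6 x
    simpa [Nat.factorial] using this
  have hgz : ∀ k, k < 4 → iteratedDeriv k (fun x => deriv (deriv u) x - R2 x) a = 0 := by
    intro k hk
    have hcd : ContDiff ℝ (k : ℕ) (deriv (deriv u)) :=
      hu4.of_le (by exact_mod_cast (by omega : k ≤ 4))
    rw [idsub hcd (by rw [hR2def]; exact quin_contDiff _ _ _ _ _ _ _) a]
    have hsh : iteratedDeriv k (deriv (deriv u)) = iteratedDeriv (k + 2) u := by
      have e1 : iteratedDeriv (k + 1 + 1) u = iteratedDeriv (k + 1) (deriv u) :=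
        iteratedDeriv_succ'
      have e2 : iteratedDeriv (k + 1) (deriv u) = iteratedDeriv k (deriv (deriv u)) :=
        iteratedDeriv_succ'
      rw [show k + 2 = k + 1 + 1 from rfl, e1, e2]
    rw [hsh, hR2it k hk, sub_self]
  have hg4 : ∀ x, |iteratedDeriv 4 (fun x => deriv (deriv u) x - R2 x) x| ≤ M := by
    intro x
    rw [idsub hu4 (by rw [hR2def]; exact quin_contDiff _ _ _ _ _ _ _) x, hR24 x, sub_zero]
    have hsh : iteratedDeriv 4 (deriv (deriv u)) = iteratedDeriv 6 u := by
      have e1 : iteratedDeriv (4 + 1 + 1) u = iteratedDeriv (4 + 1) (deriv u) :=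
        iteratedDeriv_succ'
      have e2 : iteratedDeriv (4 + 1) (deriv u) = iteratedDeriv 4 (deriv (deriv u)) :=
        iteratedDeriv_succ'
      rw [show (6 : ℕ) = 4 + 1 + 1 from rfl, e1, e2]
    rw [hsh]
    exact hM x
  have hgb : ∀ x, |deriv (deriv u) x - R2 x| ≤ M * |x - a| ^ 4 / 24 := by
    intro x
    have := polyBound 4 (fun x => deriv (deriv u) x - R2 x)
      (by exact_mod_cast hu4.sub (by rw [hR2def]; exact quin_contDiff _ _ _ _ _ _ _))
      M a hgz hg4 x
    simpa [Nat.factorial] using this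
  -- continuity
  have hQcont : Continuous Q := by rw [hQdef]; exact quin_continuous _ _ _ _ _ _ _
  have hR2cont : Continuous R2 := by rw [hR2def]; exact quin_continuous _ _ _ _ _ _ _
  have hfcont : Continuous (fun x => u x - Q x) := hucont.sub hQcont
  have hd2cont : Continuous (deriv (deriv u)) := hu4.continuous
  have hgcont : Continuous (fun x => deriv (deriv u) x - R2 x) := hd2cont.sub hR2cont
  -- splitting of the integrals
  have split_u : ∀ p q : ℝ, (∫ x in p..q, u x) =
      (∫ x in p..q, Q x) + ∫ x in p..q, (u x - Q x) := by
    intro p q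
    rw [← intervalIntegral.integral_add (hQcont.intervalIntegrable p q)
      (hfcont.intervalIntegrable p q)]
    exact intervalIntegral.integral_congr fun x _ => by ring
  have split_d2 : ∀ p q : ℝ, (∫ x in p..q, deriv (deriv u) x) =
      (∫ x in p..q, R2 x) + ∫ x in p..q, (deriv (deriv u) x - R2 x) := by
    intro p q
    rw [← intervalIntegral.integral_add (hR2cont.intervalIntegrable p q)
      (hgcont.intervalIntegrable p q)]
    exact intervalIntegral.integral_congr fun x _ => by ring
  -- exact cancellation on the Taylor polynomial
  have cancel : (∫ x in a..(((i:ℝ) + 1) * h), R2 x) = 1 / (12 * h ^ 2) *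
      (-(∫ x in (((i+2:ℤ):ℝ) * h)..((((i+2:ℤ):ℝ)) + 1) * h, Q x)
        + 16 * (∫ x in (((i+1:ℤ):ℝ) * h)..((((i+1:ℤ):ℝ)) + 1) * h, Q x)
        - 30 * (∫ x in a..(((i:ℝ) + 1) * h), Q x)
        + 16 * (∫ x in (((i-1:ℤ):ℝ) * h)..((((i-1:ℤ):ℝ)) + 1) * h, Q x)
        - ∫ x in (((i-2:ℤ):ℝ) * h)..((((i-2:ℤ):ℝ)) + 1) * h, Q x) := by
    rw [hQdef, hR2def]
    simp only [quin_integral]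
    rw [ha]
    push_cast
    rw [one_div_mul_eq_div, eq_div_iff (by positivity : (12:ℝ) * h ^ 2 ≠ 0)]
    ring
  -- bounds on remainder integrals
  have hFbound : ∀ p q : ℝ, q = p + h → a - 2 * h ≤ p → q ≤ a + 3 * h →
      |∫ x in p..q, (u x - Q x)| ≤ M * 729 * h ^ 6 / 720 * h := by
    intro p q hpq hp hq
    have hple : p ≤ q := by linarith
    rw [← Real.norm_eq_abs]
    have hb : ∀ x ∈ Set.uIoc p q, ‖u x - Q x‖ ≤ M * 729 * h ^ 6 / 720 := by
      intro x hx
      rw [Set.uIoc_of_le hple] at hx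
      rw [Real.norm_eq_abs]
      refine (hfb x).trans ?_
      have h1 : |x - a| ≤ 3 * h := by
        rw [abs_le]
        exact ⟨by linarith [hx.1], by linarith [hx.2]⟩
      have h2 : |x - a| ^ 6 ≤ (3 * h) ^ 6 := pow_le_pow_left₀ (abs_nonneg _) h1 6
      have h3 := mul_le_mul_of_nonneg_left h2 hM0
      have e : M * (3 * h) ^ 6 = M * 729 * h ^ 6 := by ring
      linarith
    refine le_trans (intervalIntegral.norm_integral_le_of_norm_le_const hb) ?_
    have e : |q - p| = h := by rw [hpq]; simp [abs_of_pos hh]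
    rw [e]
  have hGbound : |∫ x in a..(((i:ℝ) + 1) * h), (deriv (deriv u) x - R2 x)| ≤
      M * h ^ 4 / 24 * h := by
    have hq : ((i:ℝ) + 1) * h = a + h := by rw [ha]; ring
    have hple : a ≤ ((i:ℝ) + 1) * h := by rw [hq]; linarith
    rw [← Real.norm_eq_abs]
    have hb : ∀ x ∈ Set.uIoc a (((i:ℝ) + 1) * h), ‖deriv (deriv u) x - R2 x‖ ≤
        M * h ^ 4 / 24 := by
      intro x hx
      rw [Set.uIoc_of_le hple, hq] at hx
      rw [Real.norm_eq_abs]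
      refine (hgb x).trans ?_
      have h1 : |x - a| ≤ h := by
        rw [abs_le]
        exact ⟨by linarith [hx.1], by linarith [hx.2]⟩
      have h2 : |x - a| ^ 4 ≤ h ^ 4 := pow_le_pow_left₀ (abs_nonneg _) h1 4
      have h3 := mul_le_mul_of_nonneg_left h2 hM0
      linarith
    refine le_trans (intervalIntegral.norm_integral_le_of_norm_le_const hb) ?_
    have e : |((i:ℝ) + 1) * h - a| = h := by rw [hq]; simp [abs_of_pos hh]
    rw [e]
  -- instantiate the remainder bounds on the five cells
  have hB2 := hFbound ((((i+2:ℤ):ℝ)) * h) (((((i+2:ℤ):ℝ)) + 1) * h)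
    (by ring) (by rw [ha]; push_cast; nlinarith [hh.le]) (by rw [ha]; push_cast; nlinarith [hh.le])
  have hB1 := hFbound ((((i+1:ℤ):ℝ)) * h) (((((i+1:ℤ):ℝ)) + 1) * h)
    (by ring) (by rw [ha]; push_cast; nlinarith [hh.le]) (by rw [ha]; push_cast; nlinarith [hh.le])
  have hB0 := hFbound a (((i:ℝ) + 1) * h)
    (by rw [ha]; ring) (by linarith) (by rw [ha]; push_cast; nlinarith [hh.le])
  have hBm1 := hFbound ((((i-1:ℤ):ℝ)) * h) (((((i-1:ℤ):ℝ)) + 1) * h)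
    (by ring) (by rw [ha]; push_cast; nlinarith [hh.le]) (by rw [ha]; push_cast; nlinarith [hh.le])
  have hBm2 := hFbound ((((i-2:ℤ):ℝ)) * h) (((((i-2:ℤ):ℝ)) + 1) * h)
    (by ring) (by rw [ha]; push_cast; nlinarith [hh.le]) (by rw [ha]; push_cast; nlinarith [hh.le])
  -- rewrite the goal using the splittings and the cancellation
  simp only [split_u, split_d2]
  rw [cancel]
  -- abstract the integrals
  set G : ℝ := ∫ x in a..(((i:ℝ) + 1) * h), (deriv (deriv u) x - R2 x) with hGd
  set F2 : ℝ := ∫ x in ((((i+2:ℤ):ℝ)) * h)..(((((i+2:ℤ):ℝ)) + 1) * h), (u x - Q x) with hF2d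
  set F1 : ℝ := ∫ x in ((((i+1:ℤ):ℝ)) * h)..(((((i+1:ℤ):ℝ)) + 1) * h), (u x - Q x) with hF1d
  set F0 : ℝ := ∫ x in a..(((i:ℝ) + 1) * h), (u x - Q x) with hF0d
  set Fm1 : ℝ := ∫ x in ((((i-1:ℤ):ℝ)) * h)..(((((i-1:ℤ):ℝ)) + 1) * h), (u x - Q x) with hFm1d
  set Fm2 : ℝ := ∫ x in ((((i-2:ℤ):ℝ)) * h)..(((((i-2:ℤ):ℝ)) + 1) * h), (u x - Q x) with hFm2d
  have keyle : ∀ X Y : ℝ, X = Y → |Y| ≤ (6 * M + 1) * h ^ 4 → |X| ≤ (6 * M + 1) * h ^ 4 := by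
    intro X Y e hb
    rw [e]
    exact hb
  refine keyle _ (1 / h * G - 1 / (12 * h ^ 2) * (1 / h) *
    (-F2 + 16 * F1 - 30 * F0 + 16 * Fm1 - Fm2)) (by ring) ?_
  -- final numeric estimate
  obtain ⟨l2, r2⟩ := abs_le.mp hB2
  obtain ⟨l1, r1⟩ := abs_le.mp hB1
  obtain ⟨l0, r0⟩ := abs_le.mp hB0
  obtain ⟨lm1, rm1⟩ := abs_le.mp hBm1
  obtain ⟨lm2, rm2⟩ := abs_le.mp hBm2
  have hcombo : |(-F2 + 16 * F1 - 30 * F0 + 16 * Fm1 - Fm2)| ≤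
      64 * (M * 729 * h ^ 6 / 720 * h) := by
    rw [abs_le]
    constructor <;> linarith
  have t1 : |1 / h * G| ≤ 1 / h * (M * h ^ 4 / 24 * h) := by
    rw [abs_mul, abs_of_pos (by positivity : (0:ℝ) < 1 / h)]
    exact mul_le_mul_of_nonneg_left hGbound (by positivity)
  have t2 : |1 / (12 * h ^ 2) * (1 / h) * (-F2 + 16 * F1 - 30 * F0 + 16 * Fm1 - Fm2)| ≤
      1 / (12 * h ^ 2) * (1 / h) * (64 * (M * 729 * h ^ 6 / 720 * h)) := by
    rw [abs_mul, abs_of_pos (by positivity : (0:ℝ) < 1 / (12 * h ^ 2) * (1 / h))]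
    exact mul_le_mul_of_nonneg_left hcombo (by positivity)
  have tri : |1 / h * G - 1 / (12 * h ^ 2) * (1 / h) *
      (-F2 + 16 * F1 - 30 * F0 + 16 * Fm1 - Fm2)| ≤
      |1 / h * G| + |1 / (12 * h ^ 2) * (1 / h) * (-F2 + 16 * F1 - 30 * F0 + 16 * Fm1 - Fm2)| := by
    rw [sub_eq_add_neg]
    refine (abs_add_le _ _).trans ?_
    rw [abs_neg]
  have e1 : 1 / h * (M * h ^ 4 / 24 * h) = M * h ^ 4 / 24 := by
    field_simp
  have e2 : 1 / (12 * h ^ 2) * (1 / h) * (64 * (M * 729 * h ^ 6 / 720 * h)) =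
      27 / 5 * (M * h ^ 4) := by
    field_simp
    ring
  have hp4 : (0:ℝ) < h ^ 4 := by positivity
  have hmp4 : (0:ℝ) ≤ M * h ^ 4 := by positivity
  calc |1 / h * G - 1 / (12 * h ^ 2) * (1 / h) *
      (-F2 + 16 * F1 - 30 * F0 + 16 * Fm1 - Fm2)| ≤
      |1 / h * G| + |1 / (12 * h ^ 2) * (1 / h) *
        (-F2 + 16 * F1 - 30 * F0 + 16 * Fm1 - Fm2)| := tri
    _ ≤ 1 / h * (M * h ^ 4 / 24 * h) + 1 / (12 * h ^ 2) * (1 / h) *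
        (64 * (M * 729 * h ^ 6 / 720 * h)) := add_le_add t1 t2
    _ = M * h ^ 4 / 24 + 27 / 5 * (M * h ^ 4) := by rw [e1, e2]
    _ ≤ (6 * M + 1) * h ^ 4 := by nlinarith
end

section
/- Let u : ℝ → ℝ be five times continuously differentiable with cell averages ⟨u⟩_i := (1/h)∫_{ih}^{(i+1)h} u(x) dx on a uniform grid of step h > 0. Then ⟨u'⟩_i = (1/(12h))(−⟨u⟩_{i+2} + 8⟨u⟩_{i+1} − 8⟨u⟩_{i−1} + ⟨u⟩_{i−2}) + O(h⁴) as h → 0. -/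
open Set intervalIntegral

lemma integral_poly4 (a0 a1 a2 a3 a4 c A B : ℝ) :
    (∫ x in A..B, (a0 + a1*(x-c) + a2*(x-c)^2 + a3*(x-c)^3 + a4*(x-c)^4))
      = (a0*(B-c) + a1*(B-c)^2/2 + a2*(B-c)^3/3 + a3*(B-c)^4/4 + a4*(B-c)^5/5)
      - (a0*(A-c) + a1*(A-c)^2/2 + a2*(A-c)^3/3 + a3*(A-c)^4/4 + a4*(A-c)^5/5) := by
  have key : ∀ x : ℝ, HasDerivAt
      (fun y => a0*(y-c) + a1*(y-c)^2/2 + a2*(y-c)^3/3 + a3*(y-c)^4/4 + a4*(y-c)^5/5)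
      (a0 + a1*(x-c) + a2*(x-c)^2 + a3*(x-c)^3 + a4*(x-c)^4) x := by
    intro x
    have hid : HasDerivAt (fun y : ℝ => y - c) 1 x := (hasDerivAt_id x).sub_const c
    have H := ((((hid.const_mul a0).add (((hid.pow 2).const_mul a1).div_const 2)).add
        (((hid.pow 3).const_mul a2).div_const 3)).add
        (((hid.pow 4).const_mul a3).div_const 4)).add
        (((hid.pow 5).const_mul a4).div_const 5)
    refine H.congr_deriv ?_
    push_cast
    ring
  rw [intervalIntegral.integral_eq_sub_of_hasDerivAt (fun x _ => key x)
    (by apply Continuous.intervalIntegrable; continuity)]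

lemma tailcalc (M h : ℝ) (hh : 0 < h) (hM0 : 0 ≤ M) :
    (1/h) * (M * (5*h)^5 / 24) + (1/h) * (M * (5*h)^5 / 24)
      + (1/(12*h^2)) * (18 * ((M * (5*h)^5 / 24) * h)) ≤ (456*M+1)*h^4 := by
  have hne : h ≠ 0 := ne_of_gt hh
  have eq1 : (1/h) * (M * (5*h)^5 / 24) + (1/h) * (M * (5*h)^5 / 24)
      + (1/(12*h^2)) * (18 * ((M * (5*h)^5 / 24) * h)) = (21875/48) * M * h^4 := by
    field_simp
    ring
  rw [eq1]
  nlinarith [mul_nonneg hM0 (le_of_lt (pow_pos hh 4)), pow_pos hh 4]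

set_option maxHeartbeats 2000000 in
/-- Fourth-order finite-volume formula for the first derivative: for a `C⁵`
function `u` with bounded fifth derivative, the cell averages on a uniform grid
of step `h` satisfy
`⟨u'⟩_i = (1/(12h))(−⟨u⟩_{i+2} + 8⟨u⟩_{i+1} − 8⟨u⟩_{i−1} + ⟨u⟩_{i−2}) + O(h⁴)`. -/
theorem stmt_11 (u : ℝ → ℝ) (hu : ContDiff ℝ 5 u)
    (M : ℝ) (hM : ∀ x : ℝ, |iteratedDeriv 5 u x| ≤ M) :
    ∃ C : ℝ, 0 < C ∧ ∀ h : ℝ, 0 < h → ∀ i : ℤ,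
      let avg : (ℝ → ℝ) → ℤ → ℝ :=
        fun φ j => (1 / h) * ∫ x in (j * h)..((j + 1) * h), φ x
      |avg (deriv u) i -
        (1 / (12 * h)) * (-(avg u (i + 2)) + 8 * avg u (i + 1)
          - 8 * avg u (i - 1) + avg u (i - 2))| ≤ C * h ^ 4 := by
  have hM0 : 0 ≤ M := le_trans (abs_nonneg _) (hM 0)
  refine ⟨456 * M + 1, by positivity, ?_⟩
  intro h hh i
  intro avg
  set x0 : ℝ := ((i:ℝ) - 2) * h with hx0
  have hlt : x0 < x0 + 5*h := by linarith
  set s : Set ℝ := Icc x0 (x0 + 5*h) with hs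
  have husd : UniqueDiffOn ℝ s := uniqueDiffOn_Icc hlt
  -- iterated derivatives within = global
  have hglob := contDiff_iff_ftaylorSeries.mp hu
  have hEq : ∀ y ∈ s, iteratedDerivWithin 5 u s y = iteratedDeriv 5 u y := by
    intro y hy
    rw [iteratedDerivWithin_eq_iteratedFDerivWithin, iteratedDeriv_eq_iteratedFDeriv,
      ← (hglob.hasFTaylorSeriesUpToOn s).eq_iteratedFDerivWithin_of_uniqueDiffOn
        (le_refl _) husd hy]
    rfl
  have hcd : ContDiffOn ℝ ((4:ℕ) + 1) u s := by exact_mod_cast hu.contDiffOn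
  have hbound : ∀ y ∈ s, ‖iteratedDerivWithin ((4:ℕ)+1) u s y‖ ≤ M := by
    intro y hy
    rw [show (4:ℕ)+1 = 5 from rfl, hEq y hy, Real.norm_eq_abs]
    exact hM y
  set d1 : ℝ := iteratedDerivWithin 1 u s x0 with hd1
  set d2 : ℝ := iteratedDerivWithin 2 u s x0 with hd2
  set d3 : ℝ := iteratedDerivWithin 3 u s x0 with hd3
  set d4 : ℝ := iteratedDerivWithin 4 u s x0 with hd4
  have htay : ∀ x ∈ s, |u x - (u x0 + d1*(x-x0) + (d2/2)*(x-x0)^2 + (d3/6)*(x-x0)^3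
      + (d4/24)*(x-x0)^4)| ≤ M * (5*h)^5 / 24 := by
    intro x hx
    have h1 := taylor_mean_remainder_bound (le_of_lt hlt) hcd hx hbound
    rw [Real.norm_eq_abs] at h1
    norm_num [Nat.factorial] at h1
    rw [← hs, ← iteratedDerivWithin_one, ← hd1, ← hd2, ← hd3, ← hd4] at h1
    have e : u x - (u x0 + d1*(x-x0) + (d2/2)*(x-x0)^2 + (d3/6)*(x-x0)^3 + (d4/24)*(x-x0)^4)
        = u x - (u x0 + (x - x0) * d1 + 1/2*(x-x0)^2*d2 + 1/6*(x-x0)^3*d3 + 1/24*(x-x0)^4*d4) := by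
      ring
    rw [e]
    refine le_trans h1 ?_
    have hx5 : (x - x0)^5 ≤ (5*h)^5 := by
      apply pow_le_pow_left₀ (by rcases hx with ⟨h1', h2'⟩; linarith)
      rcases hx with ⟨h1', h2'⟩; linarith
    have : M * (x - x0)^5 ≤ M * (5*h)^5 := mul_le_mul_of_nonneg_left hx5 hM0
    linarith
  have hPc : Continuous (fun x : ℝ => u x0 + d1*(x-x0) + (d2/2)*(x-x0)^2 + (d3/6)*(x-x0)^3
      + (d4/24)*(x-x0)^4) := by fun_prop
  have hsplit : ∀ A B : ℝ, (∫ x in A..B, u x)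
      = (∫ x in A..B, (u x0 + d1*(x-x0) + (d2/2)*(x-x0)^2 + (d3/6)*(x-x0)^3 + (d4/24)*(x-x0)^4))
      + ∫ x in A..B, (u x - (u x0 + d1*(x-x0) + (d2/2)*(x-x0)^2 + (d3/6)*(x-x0)^3
          + (d4/24)*(x-x0)^4)) := by
    intro A B
    rw [← intervalIntegral.integral_add (hPc.intervalIntegrable _ _)
      ((hu.continuous.sub hPc).intervalIntegrable _ _)
      (g := fun x => u x - (u x0 + d1*(x-x0) + (d2/2)*(x-x0)^2 + (d3/6)*(x-x0)^3 + (d4/24)*(x-x0)^4))]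
    apply intervalIntegral.integral_congr
    intro x _
    ring
  have hFTC : (∫ x in ((i:ℝ)*h)..(((i:ℝ)+1)*h), deriv u x)
      = u (((i:ℝ)+1)*h) - u ((i:ℝ)*h) := by
    apply intervalIntegral.integral_deriv_eq_sub
    · intro x _; exact (hu.differentiable (by norm_num)).differentiableAt
    · exact (hu.continuous_deriv (by norm_num)).intervalIntegrable _ _
  set K2 : ℝ := ∫ x in (((i:ℝ)+2)*h)..(((i:ℝ)+2+1)*h), (u x - (u x0 + d1*(x-x0) + (d2/2)*(x-x0)^2 + (d3/6)*(x-x0)^3 + (d4/24)*(x-x0)^4)) with hK2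
  set K1 : ℝ := ∫ x in (((i:ℝ)+1)*h)..(((i:ℝ)+1+1)*h), (u x - (u x0 + d1*(x-x0) + (d2/2)*(x-x0)^2 + (d3/6)*(x-x0)^3 + (d4/24)*(x-x0)^4)) with hK1
  set Km1 : ℝ := ∫ x in (((i:ℝ)-1)*h)..(((i:ℝ)-1+1)*h), (u x - (u x0 + d1*(x-x0) + (d2/2)*(x-x0)^2 + (d3/6)*(x-x0)^3 + (d4/24)*(x-x0)^4)) with hKm1
  set Km2 : ℝ := ∫ x in (((i:ℝ)-2)*h)..(((i:ℝ)-2+1)*h), (u x - (u x0 + d1*(x-x0) + (d2/2)*(x-x0)^2 + (d3/6)*(x-x0)^3 + (d4/24)*(x-x0)^4)) with hKm2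
  have main : avg (deriv u) i - 1 / (12 * h) * (-(avg u (i + 2)) + 8 * avg u (i + 1)
        - 8 * avg u (i - 1) + avg u (i - 2))
      = (1/h) * (u (((i:ℝ)+1)*h) - (u x0 + d1*(((i:ℝ)+1)*h-x0) + (d2/2)*(((i:ℝ)+1)*h-x0)^2 + (d3/6)*(((i:ℝ)+1)*h-x0)^3 + (d4/24)*(((i:ℝ)+1)*h-x0)^4))
        - (1/h) * (u ((i:ℝ)*h) - (u x0 + d1*((i:ℝ)*h-x0) + (d2/2)*((i:ℝ)*h-x0)^2 + (d3/6)*((i:ℝ)*h-x0)^3 + (d4/24)*((i:ℝ)*h-x0)^4))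
        - (1/(12*h^2)) * (-K2 + 8*K1 - 8*Km1 + Km2) := by
    simp only [avg]
    push_cast
    rw [hFTC]
    simp only [hsplit, integral_poly4]
    rw [hK2, hK1, hKm1, hKm2]
    field_simp
    ring
  rw [main]
  clear_value x0 s d1 d2 d3 d4 K2 K1 Km1 Km2
  -- bounds on remainders
  have hmem : ∀ x : ℝ, x0 ≤ x → x ≤ x0 + 5*h → x ∈ s := by
    intro x h1 h2
    rw [hs]
    exact Set.mem_Icc.mpr ⟨h1, h2⟩
  have hb1 : |u (((i:ℝ)+1)*h) - (u x0 + d1*(((i:ℝ)+1)*h-x0) + (d2/2)*(((i:ℝ)+1)*h-x0)^2 + (d3/6)*(((i:ℝ)+1)*h-x0)^3 + (d4/24)*(((i:ℝ)+1)*h-x0)^4)| ≤ M * (5*h)^5 / 24 :=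
    htay _ (hmem _ (by rw [hx0]; try nlinarith) (by rw [hx0]; try nlinarith))
  have hb2 : |u ((i:ℝ)*h) - (u x0 + d1*((i:ℝ)*h-x0) + (d2/2)*((i:ℝ)*h-x0)^2 + (d3/6)*((i:ℝ)*h-x0)^3 + (d4/24)*((i:ℝ)*h-x0)^4)| ≤ M * (5*h)^5 / 24 :=
    htay _ (hmem _ (by rw [hx0]; try nlinarith) (by rw [hx0]; try nlinarith))
  have hKbound : ∀ (A B : ℝ), x0 ≤ A → B ≤ x0 + 5*h → A ≤ B → B - A = h →
      |∫ x in A..B, (u x - (u x0 + d1*(x-x0) + (d2/2)*(x-x0)^2 + (d3/6)*(x-x0)^3 + (d4/24)*(x-x0)^4))|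
        ≤ (M * (5*h)^5 / 24) * h := by
    intro A B hA hB hAB hlen
    have := intervalIntegral.norm_integral_le_of_norm_le_const (C := M * (5*h)^5 / 24)
      (f := fun x => u x - (u x0 + d1*(x-x0) + (d2/2)*(x-x0)^2 + (d3/6)*(x-x0)^3 + (d4/24)*(x-x0)^4))
      (a := A) (b := B) ?_
    · rw [Real.norm_eq_abs] at this
      refine le_trans this (le_of_eq ?_)
      rw [abs_of_nonneg (by linarith : (0:ℝ) ≤ B - A), hlen]
    · intro x hx
      rw [Set.uIoc_of_le hAB] at hx
      rw [Real.norm_eq_abs]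
      exact htay x (hmem x (by rcases hx with ⟨h1', h2'⟩; linarith) (by rcases hx with ⟨h1', h2'⟩; linarith))
  have hbK2 : |K2| ≤ (M * (5*h)^5 / 24) * h := by
    rw [hK2]; exact hKbound _ _ (by rw [hx0]; try nlinarith) (by rw [hx0]; try nlinarith) (by nlinarith) (by ring)
  have hbK1 : |K1| ≤ (M * (5*h)^5 / 24) * h := by
    rw [hK1]; exact hKbound _ _ (by rw [hx0]; try nlinarith) (by rw [hx0]; try nlinarith) (by nlinarith) (by ring)
  have hbKm1 : |Km1| ≤ (M * (5*h)^5 / 24) * h := by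
    rw [hKm1]; exact hKbound _ _ (by rw [hx0]; try nlinarith) (by rw [hx0]; try nlinarith) (by nlinarith) (by ring)
  have hbKm2 : |Km2| ≤ (M * (5*h)^5 / 24) * h := by
    rw [hKm2]; exact hKbound _ _ (by rw [hx0]; try nlinarith) (by rw [hx0]; try nlinarith) (by nlinarith) (by ring)
  -- triangle inequality
  set r1 : ℝ := u (((i:ℝ)+1)*h) - (u x0 + d1*(((i:ℝ)+1)*h-x0) + (d2/2)*(((i:ℝ)+1)*h-x0)^2 + (d3/6)*(((i:ℝ)+1)*h-x0)^3 + (d4/24)*(((i:ℝ)+1)*h-x0)^4) with hr1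
  set r2 : ℝ := u ((i:ℝ)*h) - (u x0 + d1*((i:ℝ)*h-x0) + (d2/2)*((i:ℝ)*h-x0)^2 + (d3/6)*((i:ℝ)*h-x0)^3 + (d4/24)*((i:ℝ)*h-x0)^4) with hr2
  set Z : ℝ := -K2 + 8*K1 - 8*Km1 + Km2 with hZ
  clear_value r1 r2 Z
  have hZb : |Z| ≤ 18 * ((M * (5*h)^5 / 24) * h) := by
    rw [hZ]
    have e2 := abs_le.mp hbK2
    have e1 := abs_le.mp hbK1
    have em1 := abs_le.mp hbKm1
    have em2 := abs_le.mp hbKm2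
    rw [abs_le]
    constructor <;> [linarith [e2.1, e2.2, e1.1, e1.2, em1.1, em1.2, em2.1, em2.2];
      linarith [e2.1, e2.2, e1.1, e1.2, em1.1, em1.2, em2.1, em2.2]]
  have tri : |(1/h) * r1 - (1/h) * r2 - (1/(12*h^2)) * Z|
      ≤ (1/h) * |r1| + (1/h) * |r2| + (1/(12*h^2)) * |Z| := by
    have t1 : |(1/h) * r1 - (1/h) * r2 - (1/(12*h^2)) * Z|
        ≤ |(1/h) * r1 - (1/h) * r2| + |(1/(12*h^2)) * Z| := by
      have := abs_add_le ((1/h)*r1 - (1/h)*r2) (-((1/(12*h^2))*Z))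
      rwa [← sub_eq_add_neg, abs_neg] at this
    have t2 : |(1/h) * r1 - (1/h) * r2| ≤ |(1/h) * r1| + |(1/h) * r2| := by
      have := abs_add_le ((1/h)*r1) (-((1/h)*r2))
      rwa [← sub_eq_add_neg, abs_neg] at this
    have e1 : |(1/h) * r1| = (1/h) * |r1| := by
      rw [abs_mul, abs_of_pos (by positivity : (0:ℝ) < 1/h)]
    have e2 : |(1/h) * r2| = (1/h) * |r2| := by
      rw [abs_mul, abs_of_pos (by positivity : (0:ℝ) < 1/h)]
    have e3 : |(1/(12*h^2)) * Z| = (1/(12*h^2)) * |Z| := by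
      rw [abs_mul, abs_of_pos (by positivity : (0:ℝ) < 1/(12*h^2))]
    calc |(1/h) * r1 - (1/h) * r2 - (1/(12*h^2)) * Z|
        ≤ |(1/h) * r1 - (1/h) * r2| + |(1/(12*h^2)) * Z| := t1
      _ ≤ |(1/h) * r1| + |(1/h) * r2| + |(1/(12*h^2)) * Z| := by linarith
      _ = (1/h) * |r1| + (1/h) * |r2| + (1/(12*h^2)) * |Z| := by rw [e1, e2, e3]
  refine le_trans tri ?_
  have step : (1/h) * |r1| + (1/h) * |r2| + (1/(12*h^2)) * |Z|
      ≤ (1/h) * (M * (5*h)^5 / 24) + (1/h) * (M * (5*h)^5 / 24)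
        + (1/(12*h^2)) * (18 * ((M * (5*h)^5 / 24) * h)) := by
    have p1 : (0:ℝ) < 1/h := by positivity
    have p2 : (0:ℝ) < 1/(12*h^2) := by positivity
    gcongr
  exact le_trans step (tailcalc M h hh hM0)
end
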